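/- The automorphism group of the symplectic graph Sp(2ν,2) is isomorphic to the symplectic group Sp_{2ν}(F_2) of 2ν×2ν matrices T over F_2 with T K Tᵀ = K; explicitly, the map sending T ∈ Sp_{2ν}(F_2) to the automorphism [α] ↦ [αT] is a group isomorphism from Sp_{2ν}(F_2) onto Aut(Sp(2ν,2)). -/

import Mathlib

open Matrix

/-- The standard nonsingular alternate matrix over `F` with `ν` diagonal blocks
`[[0,1],[-1,0]]`. -/
def sK (F : Type) [Field F] (ν : ℕ) : Matrix (Fin (2 * ν)) (Fin (2 * ν)) F :=
  Matrix.of fun i j =>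
    if i.val % 2 = 0 ∧ j.val = i.val + 1 then (1 : F)
    else if j.val % 2 = 0 ∧ i.val = j.val + 1 then (-1 : F) else 0

/-- The symplectic graph `Sp(2ν, q)`: vertices are the one-dimensional subspaces
of `F^(2ν)`, with `[α]` adjacent to `[β]` iff `α K βᵀ ≠ 0`. -/
def SpG (F : Type) [Field F] (ν : ℕ) :
    SimpleGraph (Projectivization F (Fin (2 * ν) → F)) :=
  SimpleGraph.fromRel fun x y => x.rep ⬝ᵥ ((sK F ν) *ᵥ y.rep) ≠ 0

/-- The automorphism group of a simple graph, as a subgroup of the permutation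
group of its vertices. -/
def autGroup {V : Type} (G : SimpleGraph V) : Subgroup (Equiv.Perm V) where
  carrier := {σ | ∀ x y, G.Adj (σ x) (σ y) ↔ G.Adj x y}
  one_mem' := by intro x y; rfl
  mul_mem' := by
    intro a b ha hb x y
    simpa [Equiv.Perm.mul_apply] using (ha (b x) (b y)).trans (hb x y)
  inv_mem' := by
    intro a ha x y
    rw [← ha (a⁻¹ x) (a⁻¹ y)]
    simp

private theorem mul_aux {m F : Type} [Fintype m] [Field F] {A B L : Matrix m m F}
    (hA : A * L * Aᵀ = L) (hB : B * L * Bᵀ = L) : (A * B) * L * (A * B)ᵀ = L := by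
  rw [Matrix.transpose_mul]
  calc A * B * L * (Bᵀ * Aᵀ) = A * (B * L * Bᵀ) * Aᵀ := by simp only [Matrix.mul_assoc]
    _ = L := by rw [hB, hA]

private theorem inv_aux {m F : Type} [Fintype m] [DecidableEq m] [Field F]
    {A A' L : Matrix m m F}
    (hA : A * L * Aᵀ = L) (h1 : A' * A = 1) : A' * L * A'ᵀ = L := by
  calc A' * L * A'ᵀ = A' * (A * L * Aᵀ) * A'ᵀ := by rw [hA]
    _ = (A' * A) * L * (A' * A)ᵀ := by
        rw [Matrix.transpose_mul]
        simp only [Matrix.mul_assoc]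
    _ = L := by rw [h1, Matrix.transpose_one, Matrix.one_mul, Matrix.mul_one]

/-- The symplectic group `Sp_{2ν}(F)`: invertible matrices `T` with `T K Tᵀ = K`. -/
def SpMat (F : Type) [Field F] (ν : ℕ) :
    Subgroup (Matrix (Fin (2 * ν)) (Fin (2 * ν)) F)ˣ where
  carrier := {T | (T : Matrix (Fin (2 * ν)) (Fin (2 * ν)) F) * sK F ν
      * (T : Matrix (Fin (2 * ν)) (Fin (2 * ν)) F)ᵀ = sK F ν}
  one_mem' := by simp
  mul_mem' := by
    intro a b ha hb
    simp only [Set.mem_setOf_eq, Units.val_mul] at *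
    exact mul_aux ha hb
  inv_mem' := by
    intro a ha
    simp only [Set.mem_setOf_eq] at *
    refine inv_aux ha ?_
    rw [← Units.val_mul, inv_mul_cancel, Units.val_one]

/-!
An automorphism `σ` of `Sp(2ν,2)` transports to a bijection `f` of `𝔽₂^(2ν)` fixing `0`, since
over `𝔽₂` a point is its unique nonzero vector. The form `α K βᵀ` takes values in `𝔽₂`, so
preserving adjacency means preserving the form. A surjection preserving a nondegenerate form
is linear (`f (u + v) - f u - f v` pairs to zero with everything), so `f` is `α ↦ αT` for a
matrix `T`, which is then symplectic. Injectivity is again the identification of points with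
nonzero vectors.
-/

namespace Matrix

variable {n R : Type*} [Fintype n] [CommRing R]

theorem vecMul_dotProduct_mulVec_vecMul (A K : Matrix n n R) (v w : n → R) :
    (v ᵥ* A) ⬝ᵥ K *ᵥ (w ᵥ* A) = v ⬝ᵥ (A * K * Aᵀ) *ᵥ w := by
  rw [← mulVec_transpose A w, mulVec_mulVec, dotProduct_mulVec, dotProduct_mulVec,
    vecMul_vecMul, ← Matrix.mul_assoc]

theorem mul_mul_transpose_eq_iff [DecidableEq n] {A K : Matrix n n R} :
    A * K * Aᵀ = K ↔ ∀ v w, (v ᵥ* A) ⬝ᵥ K *ᵥ (w ᵥ* A) = v ⬝ᵥ K *ᵥ w := by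
  simp_rw [vecMul_dotProduct_mulVec_vecMul]
  refine ⟨fun h v w => by rw [h], fun h => ?_⟩
  ext i j
  simpa using h (Pi.single i 1) (Pi.single j 1)

theorem dotProduct_mulVec_self_eq_zero {A : Matrix n n R} (hA : Aᵀ = -A)
    (hdiag : ∀ i, A i i = 0) (v : n → R) : v ⬝ᵥ A *ᵥ v = 0 := by
  have hskew : ∀ i j, A j i = -A i j := fun i j => by
    simpa using congrFun (congrFun hA i) j
  simp only [dotProduct, mulVec, Finset.mul_sum, ← Finset.sum_product']
  refine Finset.sum_ninvolution Prod.swap (fun p => ?_) (fun p hp hswap => hp ?_)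
    (fun _ => Finset.mem_univ _) Prod.swap_swap
  · rw [Prod.fst_swap, Prod.snd_swap, hskew]
    ring
  · obtain ⟨i, j⟩ := p
    obtain rfl : j = i := congrArg Prod.fst hswap
    simp [hdiag]

theorem SeparatingLeft.exists_vecMul_eq_of_surjective [DecidableEq n] {M : Matrix n n R}
    (hM : M.SeparatingLeft) {f : (n → R) → n → R} (hf : Function.Surjective f)
    (hfM : ∀ v w, f v ⬝ᵥ M *ᵥ f w = v ⬝ᵥ M *ᵥ w) : ∃ A : Matrix n n R, ∀ v, v ᵥ* A = f v := by
  have eq_of_pairing : ∀ x y, (∀ u, x ⬝ᵥ M *ᵥ f u = y ⬝ᵥ M *ᵥ f u) → x = y := by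
    intro x y h
    rw [← sub_eq_zero]
    refine (separatingLeft_def.mp hM) _ fun w => ?_
    obtain ⟨u, rfl⟩ := hf w
    rw [sub_dotProduct, h, sub_self]
  let L : (n → R) →ₗ[R] n → R :=
    { toFun := f
      map_add' := fun v w => eq_of_pairing _ _ fun u => by
        simp only [hfM, add_dotProduct]
      map_smul' := fun c v => eq_of_pairing _ _ fun u => by
        simp only [hfM, smul_dotProduct, RingHom.id_apply] }
  exact ⟨(LinearMap.toMatrix' L)ᵀ, fun v => by
    rw [vecMul_transpose, LinearMap.toMatrix'_mulVec]; rfl⟩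

end Matrix

section StandardAlternatingMatrix

open Matrix

variable (F : Type) [Field F] (ν : ℕ)

theorem sK_transpose : (sK F ν)ᵀ = -sK F ν := by
  ext i j
  rw [transpose_apply, neg_apply]
  simp only [sK, of_apply]
  split_ifs <;> first | omega | simp

theorem sK_apply_self (i : Fin (2 * ν)) : sK F ν i i = 0 := by
  simp only [sK, of_apply]
  split_ifs <;> first | omega | rfl

def sKPartner {ν : ℕ} (i : Fin (2 * ν)) : Fin (2 * ν) :=
  ⟨if i.val % 2 = 0 then i.val + 1 else i.val - 1, by split <;> omega⟩

theorem sK_apply_eq_zero {i j : Fin (2 * ν)} (h : j ≠ sKPartner i) : sK F ν i j = 0 := by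
  rw [Ne, Fin.ext_iff] at h
  simp only [sK, of_apply, sKPartner] at h ⊢
  split_ifs at h ⊢ <;> first | omega | rfl

theorem sK_mul_self : sK F ν * sK F ν = -1 := by
  ext i k
  rw [mul_apply, Finset.sum_eq_single (sKPartner i)
    (fun j _ hj => by rw [sK_apply_eq_zero F ν hj, zero_mul]) (by simp)]
  rcases eq_or_ne k i with rfl | hki
  · rw [neg_apply, one_apply_eq]
    simp only [sK, of_apply, sKPartner]
    split_ifs <;> first | omega | simp
  · rw [sK_apply_eq_zero F ν (j := k), mul_zero, neg_apply, one_apply_ne hki.symm, neg_zero]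
    rw [Ne, Fin.ext_iff] at hki ⊢
    simp only [sKPartner]
    split_ifs <;> omega

theorem sK_separatingLeft : (sK F ν).SeparatingLeft := by
  refine separatingLeft_iff_forall_vecMul_eq_zero.mpr fun v hv => ?_
  simpa [vecMul_vecMul, sK_mul_self, vecMul_neg] using congrArg (· ᵥ* sK F ν) hv

end StandardAlternatingMatrix

section SymplecticGraph

open Matrix Projectivization

variable {F : Type} [Field F] {ν : ℕ}

theorem sK_dotProduct_mulVec_self (v : Fin (2 * ν) → F) : v ⬝ᵥ sK F ν *ᵥ v = 0 :=
  dotProduct_mulVec_self_eq_zero (sK_transpose F ν) (sK_apply_self F ν) v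

theorem sK_dotProduct_mulVec_swap (v w : Fin (2 * ν) → F) :
    w ⬝ᵥ sK F ν *ᵥ v = -(v ⬝ᵥ sK F ν *ᵥ w) := by
  rw [← dotProduct_transpose_mulVec, sK_transpose, neg_mulVec, dotProduct_neg]

theorem SpG_adj_iff (x y : Projectivization F (Fin (2 * ν) → F)) :
    (SpG F ν).Adj x y ↔ x.rep ⬝ᵥ sK F ν *ᵥ y.rep ≠ 0 := by
  rw [SpG, SimpleGraph.fromRel_adj, sK_dotProduct_mulVec_swap y.rep, neg_ne_zero, or_self]
  refine and_iff_right_of_imp fun h hxy => h ?_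
  rw [hxy, sK_dotProduct_mulVec_self]

theorem SpG_adj_mk {v w : Fin (2 * ν) → F} (hv : v ≠ 0) (hw : w ≠ 0) :
    (SpG F ν).Adj (mk F v hv) (mk F w hw) ↔ v ⬝ᵥ sK F ν *ᵥ w ≠ 0 := by
  obtain ⟨a, ha⟩ := exists_smul_eq_mk_rep F v hv
  obtain ⟨b, hb⟩ := exists_smul_eq_mk_rep F w hw
  rw [SpG_adj_iff, ← ha, ← hb, Units.smul_def, Units.smul_def, mulVec_smul, smul_dotProduct,
    dotProduct_smul, smul_eq_mul, smul_eq_mul]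
  simp [a.ne_zero, b.ne_zero]

end SymplecticGraph

namespace Matrix

open Projectivization
open scoped LinearAlgebra.Projectivization

variable {n F : Type*} [Fintype n] [DecidableEq n] [Field F]

theorem vecMul_ne_zero_of_isUnit {A : Matrix n n F} (hA : IsUnit A) {v : n → F} (hv : v ≠ 0) :
    v ᵥ* A ≠ 0 := fun h => hv (vecMul_injective_of_isUnit hA (h.trans (zero_vecMul A).symm))

noncomputable def projVecMul (T : (Matrix n n F)ˣ) : Equiv.Perm (ℙ F (n → F)) where
  toFun := Projectivization.map (T : Matrix n n F).vecMulLinear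
    (vecMul_injective_of_isUnit T.isUnit)
  invFun := Projectivization.map (↑T⁻¹ : Matrix n n F).vecMulLinear
    (vecMul_injective_of_isUnit T⁻¹.isUnit)
  left_inv x := by
    induction x using ind with | h v hv =>
    show mk F ((v ᵥ* (T : Matrix n n F)) ᵥ* (↑T⁻¹ : Matrix n n F)) _ = _
    simp only [vecMul_vecMul, Units.mul_inv, vecMul_one]
  right_inv x := by
    induction x using ind with | h v hv =>
    show mk F ((v ᵥ* (↑T⁻¹ : Matrix n n F)) ᵥ* (T : Matrix n n F)) _ = _
    simp only [vecMul_vecMul, Units.inv_mul, vecMul_one]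

theorem projVecMul_mk (T : (Matrix n n F)ˣ) {v : n → F} (hv : v ≠ 0) :
    projVecMul T (mk F v hv) = mk F (v ᵥ* T) (vecMul_ne_zero_of_isUnit T.isUnit hv) :=
  rfl

theorem projVecMul_one : projVecMul (1 : (Matrix n n F)ˣ) = 1 := by
  ext x : 1
  induction x using ind with | h v hv => simp [projVecMul_mk]

theorem projVecMul_mul (S T : (Matrix n n F)ˣ) :
    projVecMul (S * T) = projVecMul T * projVecMul S := by
  ext x : 1
  induction x using ind with | h v hv => simp [projVecMul_mk, vecMul_vecMul]

end Matrix

section SymplecticAction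

open Matrix Projectivization MulOpposite
open scoped LinearAlgebra.Projectivization

variable (F : Type) [Field F] (ν : ℕ)

theorem projVecMul_mem_autGroup {T : (Matrix (Fin (2 * ν)) (Fin (2 * ν)) F)ˣ}
    (hT : T ∈ SpMat F ν) : projVecMul T ∈ autGroup (SpG F ν) := by
  intro x y
  induction x using ind with | h v hv =>
  induction y using ind with | h w hw =>
  rw [projVecMul_mk, projVecMul_mk, SpG_adj_mk, SpG_adj_mk, vecMul_dotProduct_mulVec_vecMul,
    show (T : Matrix _ _ F) * sK F ν * (T : Matrix _ _ F)ᵀ = sK F ν from hT]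

/-- The opposite appears because `[α] ↦ [αT]` is a right action: `σ_{ST} = σ_T ∘ σ_S`. -/
noncomputable def SpMat.toAutOp : SpMat F ν →* (autGroup (SpG F ν))ᵐᵒᵖ where
  toFun T := op ⟨projVecMul (T : (Matrix (Fin (2 * ν)) (Fin (2 * ν)) F)ˣ),
    projVecMul_mem_autGroup F ν T.2⟩
  map_one' := congrArg op (Subtype.ext projVecMul_one)
  map_mul' S T := congrArg op (Subtype.ext (projVecMul_mul S.1 T.1))

end SymplecticAction

namespace Projectivization

open scoped LinearAlgebra.Projectivization

variable {V : Type*} [AddCommGroup V] [Module (ZMod 2) V]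

theorem rep_mk_zmod_two (v : V) (hv : v ≠ 0) : (mk (ZMod 2) v hv).rep = v := by
  have units_eq_one : ∀ a : (ZMod 2)ˣ, a = 1 := by decide
  obtain ⟨a, ha⟩ := exists_smul_eq_mk_rep (ZMod 2) v hv
  rwa [units_eq_one a, one_smul, eq_comm] at ha

open Classical in
/-- Over `𝔽₂` a point is the same as a nonzero vector, so `σ` transports to `V`, fixing `0`. -/
noncomputable def permVec (σ : Equiv.Perm (ℙ (ZMod 2) V)) (v : V) : V :=
  if hv : v = 0 then 0 else (σ (mk (ZMod 2) v hv)).rep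

variable (σ : Equiv.Perm (ℙ (ZMod 2) V))

theorem permVec_zero : permVec σ 0 = 0 := by simp [permVec]

theorem permVec_of_ne_zero {v : V} (hv : v ≠ 0) : permVec σ v = (σ (mk (ZMod 2) v hv)).rep := by
  simp [permVec, hv]

theorem permVec_rep (x : ℙ (ZMod 2) V) : permVec σ x.rep = (σ x).rep := by
  rw [permVec_of_ne_zero σ x.rep_nonzero, mk_rep]

theorem permVec_surjective : Function.Surjective (permVec σ) := by
  intro w
  by_cases hw : w = 0
  · exact ⟨0, by rw [permVec_zero, hw]⟩
  · refine ⟨(σ⁻¹ (mk (ZMod 2) w hw)).rep, ?_⟩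
    rw [permVec_rep, Equiv.Perm.inv_def, Equiv.apply_symm_apply, rep_mk_zmod_two]

end Projectivization

section ZModTwo

open Matrix Projectivization
open scoped LinearAlgebra.Projectivization

variable {ν : ℕ}

theorem zmod_two_eq_of_ne_zero_iff {a b : ZMod 2} (h : a ≠ 0 ↔ b ≠ 0) : a = b := by
  revert a b; decide

theorem permVec_dotProduct_sK {σ : Equiv.Perm (ℙ (ZMod 2) (Fin (2 * ν) → ZMod 2))}
    (hσ : σ ∈ autGroup (SpG (ZMod 2) ν)) (v w : Fin (2 * ν) → ZMod 2) :
    permVec σ v ⬝ᵥ sK (ZMod 2) ν *ᵥ permVec σ w = v ⬝ᵥ sK (ZMod 2) ν *ᵥ w := by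
  by_cases hv : v = 0
  · simp [hv, permVec_zero]
  by_cases hw : w = 0
  · simp [hw, permVec_zero]
  apply zmod_two_eq_of_ne_zero_iff
  rw [← rep_mk_zmod_two v hv, ← rep_mk_zmod_two w hw, permVec_rep, permVec_rep, ← SpG_adj_iff,
    ← SpG_adj_iff, hσ]

theorem exists_projVecMul_eq_of_mem_autGroup
    {σ : Equiv.Perm (ℙ (ZMod 2) (Fin (2 * ν) → ZMod 2))} (hσ : σ ∈ autGroup (SpG (ZMod 2) ν)) :
    ∃ T ∈ SpMat (ZMod 2) ν, projVecMul T = σ := by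
  obtain ⟨A, hA⟩ := (sK_separatingLeft (ZMod 2) ν).exists_vecMul_eq_of_surjective
    (permVec_surjective σ) (permVec_dotProduct_sK hσ)
  have hunit : IsUnit A := vecMul_surjective_iff_isUnit.mp <| by
    simpa only [← funext hA] using permVec_surjective σ
  refine ⟨hunit.unit, mul_mul_transpose_eq_iff.mpr ?_, Equiv.ext fun x => ?_⟩
  · simpa only [IsUnit.unit_spec, hA] using permVec_dotProduct_sK hσ
  · induction x using ind with | h v hv =>
    simp only [projVecMul_mk, IsUnit.unit_spec, hA, permVec_of_ne_zero σ hv, mk_rep]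

theorem projVecMul_injective_zmod_two {n : Type*} [Fintype n] [DecidableEq n] :
    Function.Injective (projVecMul : (Matrix n n (ZMod 2))ˣ → _) := by
  intro S T h
  refine Units.ext (ext_iff_vecMul.mpr fun v => ?_)
  by_cases hv : v = 0
  · simp [hv]
  simpa [projVecMul_mk, rep_mk_zmod_two] using congrArg (fun σ => (σ (mk _ v hv)).rep) h

theorem rep_projVecMul_zmod_two {n : Type*} [Fintype n] [DecidableEq n]
    (T : (Matrix n n (ZMod 2))ˣ) (x : ℙ (ZMod 2) (n → ZMod 2)) :
    (projVecMul T x).rep = x.rep ᵥ* (T : Matrix n n (ZMod 2)) := by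
  conv_lhs => rw [← mk_rep x, projVecMul_mk, rep_mk_zmod_two]

variable (ν)

theorem SpMat.toAutOp_injective_zmod_two : Function.Injective (SpMat.toAutOp (ZMod 2) ν) :=
  fun _ _ h => Subtype.ext <| projVecMul_injective_zmod_two <|
    congrArg (fun g => (g.unop : Equiv.Perm (ℙ (ZMod 2) (Fin (2 * ν) → ZMod 2)))) h

theorem SpMat.toAutOp_surjective_zmod_two : Function.Surjective (SpMat.toAutOp (ZMod 2) ν) := by
  intro g
  obtain ⟨T, hT, hTg⟩ := exists_projVecMul_eq_of_mem_autGroup g.unop.2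
  exact ⟨⟨T, hT⟩, MulOpposite.unop_injective (Subtype.ext hTg)⟩

end ZModTwo

theorem aut_SpG_two_eq_symplectic_general (ν : ℕ) :
    ∃ φ : SpMat (ZMod 2) ν ≃* (autGroup (SpG (ZMod 2) ν))ᵐᵒᵖ,
      ∀ (T : SpMat (ZMod 2) ν) (x : Projectivization (ZMod 2) (Fin (2 * ν) → ZMod 2)),
        ((((φ T).unop : Equiv.Perm (Projectivization (ZMod 2) (Fin (2 * ν) → ZMod 2))) x).rep)
          = x.rep ᵥ* ((T : (Matrix (Fin (2 * ν)) (Fin (2 * ν)) (ZMod 2))ˣ)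
              : Matrix (Fin (2 * ν)) (Fin (2 * ν)) (ZMod 2)) :=
  ⟨MulEquiv.ofBijective (SpMat.toAutOp (ZMod 2) ν)
      ⟨SpMat.toAutOp_injective_zmod_two ν, SpMat.toAutOp_surjective_zmod_two ν⟩,
    fun T x => rep_projVecMul_zmod_two (T : (Matrix (Fin (2 * ν)) (Fin (2 * ν)) (ZMod 2))ˣ) x⟩

/-- The automorphism group of `Sp(2ν,2)` is isomorphic to the symplectic group
`Sp_{2ν}(F_2)` via the map sending `T` to the automorphism `[α] ↦ [αT]`.
(Over `F_2` a vertex, i.e. a one-dimensional subspace, is determined by its unique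
nonzero vector `rep`; the multiplicative opposite appears because the paper composes
maps in diagrammatic order: `σ_{T₁T₂} = σ_{T₂} ∘ σ_{T₁}`.) -/
theorem aut_SpG_two_eq_symplectic (ν : ℕ) (hν : 1 ≤ ν) :
    ∃ φ : SpMat (ZMod 2) ν ≃* (autGroup (SpG (ZMod 2) ν))ᵐᵒᵖ,
      ∀ (T : SpMat (ZMod 2) ν) (x : Projectivization (ZMod 2) (Fin (2 * ν) → ZMod 2)),
        ((((φ T).unop : Equiv.Perm (Projectivization (ZMod 2) (Fin (2 * ν) → ZMod 2))) x).rep)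
          = x.rep ᵥ* ((T : (Matrix (Fin (2 * ν)) (Fin (2 * ν)) (ZMod 2))ˣ)
              : Matrix (Fin (2 * ν)) (Fin (2 * ν)) (ZMod 2)) :=
  aut_SpG_two_eq_symplectic_general ν
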